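/- arXiv:1905.12097 — 3 statements merged into one kernel-verified Lean document; each statement's English description precedes it below -/
import Mathlib

section
/- The ring ℤ has enough homogeneous polynomials: for every n ≥ 1 and every finite set S ⊆ ℤ^n such that each tuple in S has coprime entries, there exists a nonconstant homogeneous polynomial f ∈ ℤ[x_1, ..., x_n] such that f(X) is a unit of ℤ for every X ∈ S. -/
/-- A commutative ring `R` has enough homogeneous polynomials if for every `n ≥ 1`
and every finite set `S ⊆ R^n` whose tuples have coprime entries, there is a
nonconstant homogeneous polynomial taking unit values on `S`. -/
def HasEnoughHomogeneousPolynomials (R : Type*) [CommRing R] : Prop :=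
  ∀ n : ℕ, 1 ≤ n → ∀ S : Finset (Fin n → R),
    (∀ Q ∈ S, Ideal.span (Set.range Q) = ⊤) →
    ∃ (f : MvPolynomial (Fin n) R) (d : ℕ), 1 ≤ d ∧ f.IsHomogeneous d ∧
      ∀ Q ∈ S, IsUnit (MvPolynomial.eval Q f)

/-!
Induction on `S`. Let `F` be homogeneous of degree `d` with `F = 1` on `S`, and let a new
primitive point `y` arrive, with `v = F(y)`. For each `x ∈ S` choose `c` with `c ⬝ x = 0` such
that `c ⬝ y` generates the ideal `{c' ⬝ y | c' ⬝ x = 0}`. That ideal contains the `2 × 2` minors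
of `(x, y)`, so modulo any maximal ideal containing `c ⬝ y` the points `x` and `y` are
proportional and `F(y)` is a nonzero multiple of `F(x) = 1`: thus `c ⬝ y` is coprime to `v`.
The product `P` of these linear forms vanishes on `S` and `h = P(y)` is coprime to `v`, so by
Euler's theorem `v ^ k - 1 = h w` for arbitrarily large `k`. With a linear form `L`, `L(y) = 1`,
the polynomial `F ^ k - w P L ^ (d k - |S|)` equals `1` on `S` and at `y`.
-/

open MvPolynomial Matrix

theorem isCoprime_of_forall_isMaximal {R : Type*} [CommRing R] {a b : R}
    (h : ∀ M : Ideal R, M.IsMaximal → a ∈ M → b ∉ M) : IsCoprime a b := by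
  rw [← Ideal.sup_eq_top_iff_isCoprime]
  by_contra hne
  obtain ⟨M, hM, hle⟩ := Ideal.exists_le_maximal _ hne
  exact h M hM (hle (Ideal.mem_sup_left (Ideal.mem_span_singleton_self a)))
    (hle (Ideal.mem_sup_right (Ideal.mem_span_singleton_self b)))

theorem Int.exists_pow_sub_one_dvd_of_isCoprime {v h : ℤ} (hvh : IsCoprime v h) :
    ∃ k, 0 < k ∧ h ∣ v ^ k - 1 := by
  -- `φ 0 = 0`, so `h = 0` (where `v = ±1`) is treated apart.
  rcases eq_or_ne h 0 with rfl | hh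
  · exact ⟨2, two_pos, by rw [Int.isUnit_sq (isCoprime_zero_right.mp hvh), sub_self]⟩
  have hu : IsUnit (v : ZMod h.natAbs) := by
    have := hvh.map (Int.castRingHom (ZMod h.natAbs))
    rwa [eq_intCast, eq_intCast,
      (ZMod.intCast_zmod_eq_zero_iff_dvd _ _).mpr (Int.natAbs_dvd.mpr dvd_rfl),
      isCoprime_zero_right] at this
  refine ⟨h.natAbs.totient, Nat.totient_pos.mpr (Int.natAbs_pos.mpr hh), ?_⟩
  rw [← Int.natAbs_dvd, ← ZMod.intCast_zmod_eq_zero_iff_dvd]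
  have := congrArg Units.val (ZMod.pow_totient hu.unit)
  rw [Units.val_pow_eq_pow_val, IsUnit.unit_spec, Units.val_one] at this
  push_cast
  rw [this, sub_self]

namespace MvPolynomial

variable {R σ : Type*} [CommRing R]

theorem IsHomogeneous.eval_smul {F : MvPolynomial σ R} {d : ℕ} (hF : F.IsHomogeneous d)
    (r : R) (x : σ → R) : eval (r • x) F = r ^ d * eval x F := by
  rw [eval_eq, eval_eq, Finset.mul_sum]
  refine Finset.sum_congr rfl fun m hm => ?_
  have hdeg : ∑ i ∈ m.support, m i = d := by
    simpa [Finsupp.weight_apply, Finsupp.sum] using hF (mem_support_iff.mp hm)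
  simp only [Pi.smul_apply, smul_eq_mul, mul_pow, Finset.prod_mul_distrib,
    Finset.prod_pow_eq_pow_sum, hdeg]
  ring

theorem eval_sub_eval_mem {I : Ideal R} {x y : σ → R} (hxy : ∀ i, x i - y i ∈ I)
    (F : MvPolynomial σ R) : eval x F - eval y F ∈ I := by
  rw [← Ideal.Quotient.eq, ← eval₂_id, ← eval₂_id, eval₂_comp_left, eval₂_comp_left]
  congr 1
  funext i
  exact Ideal.Quotient.eq.mpr (hxy i)

/-- Modulo `P`, the minors say that `y i • x ≡ x i • y`, where `y i ∉ P` as `y` is primitive. -/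
theorem IsHomogeneous.eval_mem_of_minors_mem {P : Ideal R} [P.IsPrime] {F : MvPolynomial σ R}
    {d : ℕ} (hF : F.IsHomogeneous d) {x y : σ → R} (hy : Ideal.span (Set.range y) = ⊤)
    (hxy : ∀ i j, y i * x j - y j * x i ∈ P) (hyF : eval y F ∈ P) : eval x F ∈ P := by
  obtain ⟨i, hi⟩ : ∃ i, y i ∉ P := by
    by_contra! h
    exact Ideal.IsPrime.ne_top ‹_›
      (top_le_iff.mp (hy ▸ Ideal.span_le.mpr (Set.range_subset_iff.mpr h)))
  have hcong : eval (y i • x) F - eval (x i • y) F ∈ P :=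
    eval_sub_eval_mem (fun j => by simpa [mul_comm] using hxy i j) F
  rw [hF.eval_smul, hF.eval_smul] at hcong
  have : y i ^ d * eval x F ∈ P := by
    simpa using P.add_mem hcong (P.mul_mem_left (x i ^ d) hyF)
  exact (Ideal.IsPrime.mem_or_mem ‹_› this).resolve_left
    fun h => hi (Ideal.IsPrime.mem_of_pow_mem ‹_› _ h)

theorem exists_isHomogeneous_eval_eq_one_of_dvd_pow_sub_one {S : Finset (σ → R)} {y : σ → R}
    {F P L : MvPolynomial σ R} {d e k : ℕ} (hF : F.IsHomogeneous d) (hFS : ∀ x ∈ S, eval x F = 1)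
    (hP : P.IsHomogeneous e) (hPS : ∀ x ∈ S, eval x P = 0) (hL : L.IsHomogeneous 1)
    (hLy : eval y L = 1) (hk : e ≤ d * k) (hdvd : eval y P ∣ eval y F ^ k - 1) :
    ∃ G : MvPolynomial σ R,
      G.IsHomogeneous (d * k) ∧ eval y G = 1 ∧ ∀ x ∈ S, eval x G = 1 := by
  obtain ⟨w, hw⟩ := hdvd
  refine ⟨F ^ k - C w * (P * L ^ (d * k - e)), ?_, ?_, fun x hx => ?_⟩
  · have hPL := (isHomogeneous_C σ w).mul (hP.mul (hL.pow (d * k - e)))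
    rw [zero_add, one_mul, Nat.add_sub_cancel' hk] at hPL
    exact (hF.pow k).sub hPL
  · simp only [map_sub, map_pow, map_mul, eval_C, hLy, one_pow, mul_one]
    linear_combination hw
  · simp [hFS x hx, hPS x hx]

variable [Fintype σ]

noncomputable def linearForm (c : σ → R) : MvPolynomial σ R :=
  ∑ i, C (c i) * X i

theorem isHomogeneous_linearForm (c : σ → R) : (linearForm c).IsHomogeneous 1 :=
  IsHomogeneous.sum _ _ _ fun i _ => isHomogeneous_C_mul_X (c i) i

@[simp]
theorem eval_linearForm (c x : σ → R) : eval x (linearForm c) = c ⬝ᵥ x := by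
  simp [linearForm, dotProduct]

end MvPolynomial

section PrincipalIdealRing

variable {R σ : Type*} [CommRing R] [IsPrincipalIdealRing R] [Fintype σ]

theorem exists_dotProduct_eq_zero_dvd_minors (x y : σ → R) :
    ∃ c : σ → R, c ⬝ᵥ x = 0 ∧ ∀ i j, c ⬝ᵥ y ∣ y i * x j - y j * x i := by
  classical
  let I : Ideal R := (LinearMap.ker (dotProductBilin R R x)).map (dotProductBilin R R y)
  obtain ⟨c, hcx, hcy⟩ := Submodule.IsPrincipal.generator_mem I
  refine ⟨c, by simpa [dotProduct_comm] using hcx, fun i j => ?_⟩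
  rw [dotProduct_comm, ← dotProductBilin_apply_apply R R, hcy,
    ← Submodule.IsPrincipal.mem_iff_generator_dvd]
  exact ⟨Pi.single i (x j) - Pi.single j (x i), by simp [mul_comm], by simp [mul_comm]⟩

theorem exists_dotProduct_eq_zero_isCoprime_eval {x y : σ → R}
    (hy : Ideal.span (Set.range y) = ⊤) {F : MvPolynomial σ R} {d : ℕ} (hF : F.IsHomogeneous d)
    (hxF : IsUnit (eval x F)) : ∃ c : σ → R, c ⬝ᵥ x = 0 ∧ IsCoprime (c ⬝ᵥ y) (eval y F) := by
  obtain ⟨c, hcx, hc⟩ := exists_dotProduct_eq_zero_dvd_minors x y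
  refine ⟨c, hcx, isCoprime_of_forall_isMaximal fun M hM hcM hyF => ?_⟩
  exact hM.ne_top (M.eq_top_of_isUnit_mem
    (hF.eval_mem_of_minors_mem hy (fun i j => M.mem_of_dvd (hc i j) hcM) hyF) hxF)

end PrincipalIdealRing

theorem Int.exists_isHomogeneous_eval_eq_one {σ : Type*} [Fintype σ] (S : Finset (σ → ℤ))
    (hS : ∀ x ∈ S, Ideal.span (Set.range x) = ⊤) :
    ∃ (F : MvPolynomial σ ℤ) (d : ℕ), 0 < d ∧ F.IsHomogeneous d ∧ ∀ x ∈ S, eval x F = 1 := by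
  classical
  induction S using Finset.induction_on with
  | empty => exact ⟨0, 1, one_pos, isHomogeneous_zero _ _ _, by simp⟩
  | @insert y S _ ih =>
    obtain ⟨hy, hS⟩ := (Finset.forall_mem_insert _ _ _).mp hS
    obtain ⟨F, d, hd, hF, hFS⟩ := ih hS
    obtain ⟨b, hb⟩ : ∃ b : σ → ℤ, b ⬝ᵥ y = 1 := by
      simpa [dotProduct] using (Submodule.mem_span_range_iff_exists_fun ℤ).mp
        (hy ▸ Submodule.mem_top : (1 : ℤ) ∈ Ideal.span (Set.range y))
    choose! c hcx hcy using fun x hx =>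
      exists_dotProduct_eq_zero_isCoprime_eval hy hF ((hFS x hx).symm ▸ isUnit_one)
    let P := ∏ x ∈ S, linearForm (c x)
    have hP : P.IsHomogeneous S.card := by
      simpa using IsHomogeneous.prod S _ (fun _ => 1) fun x _ => isHomogeneous_linearForm (c x)
    have hPS : ∀ x ∈ S, eval x P = 0 := fun x hx => by
      simpa [P, map_prod] using Finset.prod_eq_zero (f := fun z => c z ⬝ᵥ x) hx (hcx x hx)
    obtain ⟨k, hk, hdvd⟩ := Int.exists_pow_sub_one_dvd_of_isCoprime
      (IsCoprime.prod_right fun x hx => (hcy x hx).symm)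
    obtain ⟨G, hG, hGy, hGS⟩ := exists_isHomogeneous_eval_eq_one_of_dvd_pow_sub_one hF hFS hP hPS
      (isHomogeneous_linearForm b) (by simpa using hb) (k := k * (S.card + 1))
      ((Nat.le_succ _).trans ((Nat.le_mul_of_pos_left _ hk).trans (Nat.le_mul_of_pos_left _ hd)))
      (by simpa [P, map_prod] using hdvd.trans (pow_one_sub_dvd_pow_mul_sub_one _ _ _))
    exact ⟨G, d * (k * (S.card + 1)), by positivity, hG,
      (Finset.forall_mem_insert _ _ _).mpr ⟨hGy, hGS⟩⟩

/-- The ring ℤ has enough homogeneous polynomials. -/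
theorem int_hasEnoughHomogeneousPolynomials :
    HasEnoughHomogeneousPolynomials ℤ := by
  intro n _ S hS
  obtain ⟨F, d, hd, hF, hFS⟩ := Int.exists_isHomogeneous_eval_eq_one S hS
  exact ⟨F, d, hd, hF, fun x hx => (hFS x hx).symm ▸ isUnit_one⟩
end

section
/- Let R_1 and R_2 be commutative rings. If R_1 and R_2 each have enough homogeneous polynomials, then the product ring R_1 × R_2 has enough homogeneous polynomials. -/
open MvPolynomial

theorem Ideal.span_range_comp_eq_top {ι R S : Type*} [Semiring R] [Semiring S]
    (f : R →+* S) {Q : ι → R} (h : Ideal.span (Set.range Q) = ⊤) :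
    Ideal.span (Set.range (f ∘ Q)) = ⊤ := by
  rw [Set.range_comp, ← Ideal.map_span, h, Ideal.map_top]

namespace MvPolynomial

variable {σ R₁ R₂ : Type*} [CommSemiring R₁] [CommSemiring R₂]

theorem exists_map_fst_eq_and_map_snd_eq (p : MvPolynomial σ R₁) (q : MvPolynomial σ R₂) :
    ∃ F : MvPolynomial σ (R₁ × R₂),
      map (RingHom.fst R₁ R₂) F = p ∧ map (RingHom.snd R₁ R₂) F = q := by
  obtain ⟨P, rfl⟩ := map_surjective (RingHom.fst R₁ R₂) Prod.fst_surjective p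
  obtain ⟨Q, rfl⟩ := map_surjective (RingHom.snd R₁ R₂) Prod.snd_surjective q
  exact ⟨C (1, 0) * P + C (0, 1) * Q, by simp, by simp⟩

theorem IsHomogeneous.of_map_fst_of_map_snd {F : MvPolynomial σ (R₁ × R₂)} {d : ℕ}
    (h₁ : (map (RingHom.fst R₁ R₂) F).IsHomogeneous d)
    (h₂ : (map (RingHom.snd R₁ R₂) F).IsHomogeneous d) : F.IsHomogeneous d := by
  intro m hm
  by_cases hm₁ : (coeff m F).1 = 0
  · have hm₂ : (coeff m F).2 ≠ 0 := fun hm₂ => hm (Prod.ext hm₁ hm₂)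
    exact h₂ (by rwa [coeff_map])
  · exact h₁ (by rwa [coeff_map])

theorem isUnit_eval_prod_iff (Q : σ → R₁ × R₂) (F : MvPolynomial σ (R₁ × R₂)) :
    IsUnit (eval Q F) ↔ IsUnit (eval (Prod.fst ∘ Q) (map (RingHom.fst R₁ R₂) F)) ∧
      IsUnit (eval (Prod.snd ∘ Q) (map (RingHom.snd R₁ R₂) F)) := by
  rw [Prod.isUnit_iff, eval_map, eval_map, ← RingHom.coe_fst, ← RingHom.coe_snd, ← eval₂_comp,
    ← eval₂_comp]

end MvPolynomial

/-- If `R₁` and `R₂` have enough homogeneous polynomials, so does `R₁ × R₂`. -/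
theorem prod_hasEnoughHomogeneousPolynomials
    (R₁ R₂ : Type*) [CommRing R₁] [CommRing R₂]
    (h₁ : HasEnoughHomogeneousPolynomials R₁)
    (h₂ : HasEnoughHomogeneousPolynomials R₂) :
    HasEnoughHomogeneousPolynomials (R₁ × R₂) := by
  classical
  intro n hn S hS
  obtain ⟨f₁, d₁, hd₁, hf₁, hu₁⟩ := h₁ n hn (S.image (Prod.fst ∘ ·)) <| by
    simpa using fun Q hQ => Ideal.span_range_comp_eq_top (RingHom.fst R₁ R₂) (hS Q hQ)
  obtain ⟨f₂, d₂, hd₂, hf₂, hu₂⟩ := h₂ n hn (S.image (Prod.snd ∘ ·)) <| by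
    simpa using fun Q hQ => Ideal.span_range_comp_eq_top (RingHom.snd R₁ R₂) (hS Q hQ)
  obtain ⟨F, hF₁, hF₂⟩ := exists_map_fst_eq_and_map_snd_eq (f₁ ^ d₂) (f₂ ^ d₁)
  have hF : F.IsHomogeneous (d₁ * d₂) :=
    .of_map_fst_of_map_snd (hF₁ ▸ hf₁.pow d₂) (hF₂ ▸ mul_comm d₁ d₂ ▸ hf₂.pow d₁)
  refine ⟨F, d₁ * d₂, Nat.mul_le_mul hd₁ hd₂, hF, fun Q hQ => ?_⟩
  rw [isUnit_eval_prod_iff, hF₁, hF₂, map_pow, map_pow]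
  exact ⟨(hu₁ _ (Finset.mem_image_of_mem _ hQ)).pow d₂,
    (hu₂ _ (Finset.mem_image_of_mem _ hQ)).pow d₁⟩
end

section
/- Every Artinian commutative ring has enough homogeneous polynomials. -/
/-! Over a field, a homogeneous form that is nonzero at finitely many nonzero points is built one
point at a time: if `f` vanishes at a new point `v`, then `v` is proportional to no earlier point,
so a product `L` of linear forms vanishes at the earlier points but not at `v`, and
`f ^ (k + 1) + (L * X i) ^ d` works. An Artinian ring has finitely many maximal ideals; by the
Chinese remainder theorem, the forms over the residue fields, raised to a common degree, lift to a
single homogeneous form over `R`, whose values on `S` lie in no maximal ideal and are thus units. -/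

namespace MvPolynomial

variable {σ K : Type*}

theorem IsHomogeneous.eval_smul_s6 {R : Type*} [CommSemiring R] {f : MvPolynomial σ R} {d : ℕ}
    (hf : f.IsHomogeneous d) (a : R) (x : σ → R) :
    eval (a • x) f = a ^ d * eval x f := by
  rw [eval_eq, eval_eq, Finset.mul_sum]
  refine Finset.sum_congr rfl fun m hm => ?_
  have hdeg : ∑ i ∈ m.support, m i = d := by
    simpa [Finsupp.weight_apply, Finsupp.sum] using hf (mem_support_iff.mp hm)
  simp only [Pi.smul_apply, smul_eq_mul, mul_pow, Finset.prod_mul_distrib,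
    Finset.prod_pow_eq_pow_sum, hdeg]
  ring

theorem exists_isHomogeneous_one_eval_eq_zero_of_notMem_span [Field K] {v w : σ → K}
    (hw : w ≠ 0) (hv : v ∉ K ∙ w) :
    ∃ ℓ : MvPolynomial σ K, ℓ.IsHomogeneous 1 ∧ eval w ℓ = 0 ∧ eval v ℓ ≠ 0 := by
  obtain ⟨j, hj⟩ : ∃ j, w j ≠ 0 := Function.ne_iff.mp hw
  by_contra! h
  refine hv (Submodule.mem_span_singleton.mpr ⟨v j / w j, ?_⟩)
  ext i
  have hvw := h (C (w j) * X i - C (w i) * X j)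
    ((isHomogeneous_C_mul_X _ _).sub (isHomogeneous_C_mul_X _ _)) (by simp; ring)
  simp only [map_sub, map_mul, eval_C, eval_X] at hvw
  rw [Pi.smul_apply, smul_eq_mul]
  field_simp
  linear_combination -hvw

theorem exists_isHomogeneous_eval_ne_zero_forall_eval_eq_zero [Field K] {v : σ → K}
    (T : Finset (σ → K)) (hT : ∀ w ∈ T, w ≠ 0 ∧ v ∉ K ∙ w) :
    ∃ (L : MvPolynomial σ K) (k : ℕ), L.IsHomogeneous k ∧ eval v L ≠ 0 ∧
      ∀ w ∈ T, eval w L = 0 := by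
  classical
  induction T using Finset.induction_on with
  | empty => exact ⟨1, 0, isHomogeneous_one σ K, by simp, by simp⟩
  | insert w T _ ih =>
    obtain ⟨L, k, hL, hLv, hLT⟩ := ih fun u hu => hT u (Finset.mem_insert_of_mem hu)
    obtain ⟨hw, hvw⟩ := hT w (Finset.mem_insert_self w T)
    obtain ⟨ℓ, hℓ, hℓw, hℓv⟩ := exists_isHomogeneous_one_eval_eq_zero_of_notMem_span hw hvw
    refine ⟨L * ℓ, k + 1, hL.mul hℓ, by simp [hLv, hℓv], ?_⟩
    simp only [Finset.forall_mem_insert, map_mul, hℓw, mul_zero, true_and]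
    exact fun u hu => by rw [hLT u hu, zero_mul]

theorem exists_isHomogeneous_forall_eval_ne_zero [Field K] [Nonempty σ] (T : Finset (σ → K))
    (hT : ∀ v ∈ T, v ≠ 0) :
    ∃ (f : MvPolynomial σ K) (d : ℕ), 0 < d ∧ f.IsHomogeneous d ∧ ∀ v ∈ T, eval v f ≠ 0 := by
  classical
  induction T using Finset.induction_on with
  | empty => exact ⟨X (Classical.arbitrary σ), 1, one_pos, isHomogeneous_X K _, by simp⟩
  | insert v T _ ih =>
    obtain ⟨f, d, hd, hf, hfT⟩ := ih fun w hw => hT w (Finset.mem_insert_of_mem hw)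
    rcases ne_or_eq (eval v f) 0 with hfv | hfv
    · exact ⟨f, d, hd, hf, Finset.forall_mem_insert _ _ _ |>.mpr ⟨hfv, hfT⟩⟩
    have hv : v ≠ 0 := hT v (Finset.mem_insert_self v T)
    have hvT : ∀ w ∈ T, w ≠ 0 ∧ v ∉ K ∙ w := by
      refine fun w hw => ⟨hT w (Finset.mem_insert_of_mem hw), fun hvw => ?_⟩
      obtain ⟨a, rfl⟩ := Submodule.mem_span_singleton.mp hvw
      have ha : a ≠ 0 := by rintro rfl; exact hv (zero_smul K w)
      exact mul_ne_zero (pow_ne_zero d ha) (hfT w hw) (hf.eval_smul_s6 a w ▸ hfv)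
    obtain ⟨L, k, hL, hLv, hLT⟩ := exists_isHomogeneous_eval_ne_zero_forall_eval_eq_zero T hvT
    obtain ⟨i, hi⟩ : ∃ i, v i ≠ 0 := Function.ne_iff.mp hv
    refine ⟨f ^ (k + 1) + (L * X i) ^ d, d * (k + 1), by positivity,
      (hf.pow _).add (mul_comm (k + 1) d ▸ (hL.mul (isHomogeneous_X K i)).pow d), ?_⟩
    refine Finset.forall_mem_insert _ _ _ |>.mpr ⟨by simp [hfv, hLv, hi], fun w hw => ?_⟩
    simp [hLT w hw, hfT w hw, hd.ne']

theorem IsHomogeneous.exists_map_eq {R S : Type*} [CommSemiring R] [CommSemiring S]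
    {φ : R →+* S} (hφ : Function.Surjective φ) {g : MvPolynomial σ S} {d : ℕ}
    (hg : g.IsHomogeneous d) :
    ∃ f : MvPolynomial σ R, f.IsHomogeneous d ∧ map φ f = g := by
  obtain ⟨f, rfl⟩ := map_surjective φ hφ g
  refine ⟨homogeneousComponent d f, homogeneousComponent_isHomogeneous d f, ?_⟩
  ext m
  rw [coeff_map, coeff_homogeneousComponent]
  split_ifs with hm
  · rw [coeff_map]
  · rw [map_zero, hg.coeff_eq_zero hm]

theorem exists_isHomogeneous_forall_map_mk_eq {R ι : Type*} [CommRing R] [Finite ι]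
    {I : ι → Ideal R} (hI : Pairwise fun i j => IsCoprime (I i) (I j)) {d : ℕ}
    (G : ∀ i, MvPolynomial σ (R ⧸ I i)) (hG : ∀ i, (G i).IsHomogeneous d) :
    ∃ f : MvPolynomial σ R, f.IsHomogeneous d ∧ ∀ i, map (Ideal.Quotient.mk (I i)) f = G i := by
  classical
  have := Fintype.ofFinite ι
  choose e he using fun j => Ideal.pi_quotient_surjective hI (Pi.single j 1)
  choose F hF hFG using fun j => (hG j).exists_map_eq Ideal.Quotient.mk_surjective
  refine ⟨∑ j, C (e j) * F j, IsHomogeneous.sum _ _ _ fun j _ => (hF j).C_mul (e j), fun i => ?_⟩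
  rw [map_sum, Finset.sum_eq_single i]
  · simp [he, hFG]
  · intro j _ hji
    simp [he, hji.symm]
  · simp

end MvPolynomial

open MvPolynomial

theorem Ideal.Quotient.mk_comp_ne_zero_of_span_range_eq_top {σ R : Type*} [CommRing R]
    {I : Ideal R} (hI : I ≠ ⊤) {Q : σ → R} (hQ : Ideal.span (Set.range Q) = ⊤) :
    Ideal.Quotient.mk I ∘ Q ≠ 0 := by
  intro h
  refine hI (eq_top_iff.mpr (hQ ▸ Ideal.span_le.mpr ?_))
  rintro _ ⟨i, rfl⟩
  exact Ideal.Quotient.eq_zero_iff_mem.mp (congrFun h i)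

theorem hasEnoughHomogeneousPolynomials_of_finite_maximalSpectrum (R : Type*) [CommRing R]
    [Finite (MaximalSpectrum R)] : HasEnoughHomogeneousPolynomials R := by
  classical
  have := Fintype.ofFinite (MaximalSpectrum R)
  intro n hn S hS
  have : Nonempty (Fin n) := ⟨⟨0, hn⟩⟩
  choose G d hd hG hGS using fun m : MaximalSpectrum R =>
    letI := Ideal.Quotient.field m.asIdeal
    exists_isHomogeneous_forall_eval_ne_zero (S.image (Ideal.Quotient.mk m.asIdeal ∘ ·)) <| by
      simpa using fun Q hQ => Ideal.Quotient.mk_comp_ne_zero_of_span_range_eq_top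
        m.isMaximal.ne_top (hS Q hQ)
  set D := ∏ m, d m
  have hdD : ∀ m, d m * (D / d m) = D := fun m =>
    Nat.mul_div_cancel' (Finset.dvd_prod_of_mem d (Finset.mem_univ m))
  obtain ⟨f, hf, hfG⟩ := exists_isHomogeneous_forall_map_mk_eq
    (fun m m' h => MaximalSpectrum.isCoprime_of_ne h) (fun m => G m ^ (D / d m))
    (fun m => hdD m ▸ (hG m).pow (D / d m))
  refine ⟨f, D, Finset.prod_pos fun m _ => hd m, hf, fun Q hQ => ?_⟩
  by_contra hfQ
  obtain ⟨I, hI, hfQI⟩ := exists_max_ideal_of_mem_nonunits hfQ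
  refine pow_ne_zero (D / d ⟨I, hI⟩) (hGS ⟨I, hI⟩ _ (Finset.mem_image_of_mem _ hQ)) ?_
  rw [← map_pow, ← hfG ⟨I, hI⟩, eval_map, ← eval₂_comp]
  exact Ideal.Quotient.eq_zero_iff_mem.mpr hfQI

/-- Every Artinian commutative ring has enough homogeneous polynomials. -/
theorem artinian_hasEnoughHomogeneousPolynomials
    (R : Type*) [CommRing R] [IsArtinianRing R] :
    HasEnoughHomogeneousPolynomials R :=
  hasEnoughHomogeneousPolynomials_of_finite_maximalSpectrum R
end
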